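/- arXiv:1312.2368 — 3 statements merged into one kernel-verified Lean document; each statement's English description precedes it below -/
import Mathlib

section
/- Let Q be a substochastic n×n matrix (nonnegative entries, each row sum at most 1). If there exists an integer k > 0 such that every row sum of Qᵏ is strictly less than 1, then the spectral radius of Q satisfies ρ(Q) < 1. -/
open Matrix Filter Finset
open scoped ENNReal NNReal

noncomputable def specRad {n : ℕ} (Q : Matrix (Fin n) (Fin n) ℝ) : ℝ≥0∞ :=
  spectralRadius ℂ (Q.map (Complex.ofReal))

noncomputable def vnorm1 {n : ℕ} (v : Fin n → ℝ) : ℝ := ∑ i, |v i|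

noncomputable def matNorm1 {n : ℕ} (A : Matrix (Fin n) (Fin n) ℝ) : ℝ := ⨆ j, ∑ i, |A i j|

lemma pow_entry_nonneg {n : ℕ} (Q : Matrix (Fin n) (Fin n) ℝ)
    (hQ : ∀ i j, 0 ≤ Q i j) (k : ℕ) : ∀ i j, 0 ≤ (Q ^ k) i j := by
  induction k with
  | zero =>
    intro i j
    simp only [pow_zero, Matrix.one_apply]
    split <;> norm_num
  | succ m ih =>
    intro i j
    rw [pow_succ, Matrix.mul_apply]
    exact Finset.sum_nonneg fun l _ => mul_nonneg (ih i l) (hQ l j)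

theorem stmt_1 {n : ℕ} (Q : Matrix (Fin n) (Fin n) ℝ)
    (hQ : ∀ i j, 0 ≤ Q i j) (hrow : ∀ i, ∑ j, Q i j ≤ 1)
    (hk : ∃ k : ℕ, 0 < k ∧ ∀ i, ∑ j, (Q ^ k) i j < 1) :
    specRad Q < 1 := by
  obtain ⟨k, hkpos, hklt⟩ := hk
  letI : SeminormedRing (Matrix (Fin n) (Fin n) ℂ) :=
    Matrix.linftyOpSemiNormedRing
  letI : NormedRing (Matrix (Fin n) (Fin n) ℂ) :=
    Matrix.linftyOpNormedRing
  letI : NormedAlgebra ℂ (Matrix (Fin n) (Fin n) ℂ) :=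
    Matrix.linftyOpNormedAlgebra
  set A : Matrix (Fin n) (Fin n) ℂ := Q.map (Complex.ofReal) with hA
  -- the map commutes with powers
  have hpow : A ^ k = (Q ^ k).map (Complex.ofReal) := by
    have : A = (Complex.ofRealHom.mapMatrix : Matrix (Fin n) (Fin n) ℝ →+* _) Q := rfl
    rw [this, ← map_pow]
    rfl
  -- the norm of A ^ k is < 1
  have hnorm : ‖A ^ k‖₊ < 1 := by
    rw [hpow, Matrix.linfty_opNNNorm_def]
    refine Finset.sup_lt_iff (by norm_num) |>.mpr fun i _ => ?_
    have h1 : ((∑ j, ‖((Q ^ k).map (Complex.ofReal)) i j‖₊ : ℝ≥0) : ℝ)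
        = ∑ j, (Q ^ k) i j := by
      push_cast
      refine Finset.sum_congr rfl fun j _ => ?_
      rw [Matrix.map_apply, Complex.norm_real, Real.norm_eq_abs]
      exact abs_of_nonneg (pow_entry_nonneg Q hQ k i j)
    have := hklt i
    rw [← h1] at this
    exact_mod_cast this
  have hone : ‖(1 : Matrix (Fin n) (Fin n) ℂ)‖₊ ≤ 1 := by
    rw [Matrix.linfty_opNNNorm_def]
    refine Finset.sup_le fun i _ => ?_
    have : ∀ j, ‖(1 : Matrix (Fin n) (Fin n) ℂ) i j‖₊ = if i = j then 1 else 0 := by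
      intro j
      simp [Matrix.one_apply]
      split <;> simp
    simp only [this]
    simp
  -- apply the Gelfand-type bound
  obtain ⟨m, rfl⟩ : ∃ m, k = m + 1 := ⟨k - 1, (Nat.succ_pred_eq_of_pos hkpos).symm⟩
  have hb := spectrum.spectralRadius_le_pow_nnnorm_pow_one_div ℂ A m
  refine lt_of_le_of_lt hb ?_
  have hx : ((‖A ^ (m + 1)‖₊ : ℝ≥0∞)) ^ (1 / (m + 1) : ℝ) < 1 := by
    apply ENNReal.rpow_lt_one
    · exact_mod_cast hnorm
    · positivity
  have hy : ((‖(1 : Matrix (Fin n) (Fin n) ℂ)‖₊ : ℝ≥0∞)) ^ (1 / (m + 1) : ℝ) ≤ 1 := by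
    apply ENNReal.rpow_le_one
    · exact_mod_cast hone
    · positivity
  calc _ ≤ (‖A ^ (m + 1)‖₊ : ℝ≥0∞) ^ (1 / (m + 1) : ℝ) * 1 := by gcongr
    _ = _ := mul_one _
    _ < 1 := hx
end

section
/- (Average drift upper bound) Let Q be a nonnegative square matrix with ρ(Q) < 1, q₀ a nonnegative nonzero vector, and qₜᵀ = q₀ᵀQᵗ. Let d be a nonnegative vector. If for every t ≥ 0 with ‖qₜ‖₁ > 0 the average drift satisfies qₜᵀ(I−Q)d ≥ ‖qₜ‖₁, then q₀ᵀ·h ≤ q₀ᵀ·d, where h = (I−Q)⁻¹·1 is the expected hitting time vector. -/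
open Matrix Filter Finset
open scoped ENNReal NNReal Topology

section aux
attribute [local instance] Matrix.linftyOpNormedRing Matrix.linftyOpNormedAlgebra

lemma entry_nnnorm_le {n : ℕ} (A : Matrix (Fin n) (Fin n) ℂ) (i j : Fin n) :
    ‖A i j‖₊ ≤ ‖A‖₊ := by
  rw [Matrix.linfty_opNNNorm_def]
  calc ‖A i j‖₊ ≤ ∑ j', ‖A i j'‖₊ :=
        Finset.single_le_sum (f := fun j' => ‖A i j'‖₊) (fun _ _ => zero_le) (Finset.mem_univ j)
    _ ≤ _ := Finset.le_sup (f := fun i => ∑ j', ‖A i j'‖₊) (Finset.mem_univ i)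

lemma pow_entry_tendsto_zero {n : ℕ} (Q : Matrix (Fin n) (Fin n) ℝ)
    (hρ : specRad Q < 1) (i j : Fin n) :
    Tendsto (fun t : ℕ => (Q ^ t) i j) atTop (𝓝 0) := by
  set Qc : Matrix (Fin n) (Fin n) ℂ := Q.map Complex.ofReal with hQc
  have hmap : ∀ t : ℕ, (Q ^ t).map Complex.ofReal = Qc ^ t := by
    intro t
    have := map_pow (Complex.ofRealHom.mapMatrix) Q t
    simp only [RingHom.mapMatrix_apply] at this; exact this
  obtain ⟨r, hr1, hr2⟩ := ENNReal.lt_iff_exists_nnreal_btwn.mp hρ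
  have hrlt1 : r < 1 := by exact_mod_cast hr2
  have hg := spectrum.pow_nnnorm_pow_one_div_tendsto_nhds_spectralRadius Qc
  have hev : ∀ᶠ t : ℕ in atTop, (‖Qc ^ t‖₊ : ℝ≥0∞) ^ (1 / (t:ℝ)) < r :=
    hg.eventually_lt_const hr1
  have hbd : ∀ᶠ t : ℕ in atTop, ‖Qc ^ t‖ ≤ (r:ℝ) ^ t := by
    filter_upwards [hev, eventually_ge_atTop 1] with t ht ht1
    have htne : (t:ℝ) ≠ 0 := by positivity
    have h2 : (‖Qc ^ t‖₊ : ℝ≥0∞) ≤ (r : ℝ≥0∞) ^ (t:ℝ) := by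
      calc (‖Qc ^ t‖₊ : ℝ≥0∞) = ((‖Qc ^ t‖₊ : ℝ≥0∞) ^ (1/(t:ℝ))) ^ (t:ℝ) := by
            rw [← ENNReal.rpow_mul, one_div_mul_cancel htne, ENNReal.rpow_one]
        _ ≤ _ := ENNReal.rpow_le_rpow ht.le (by positivity)
    rw [ENNReal.rpow_natCast] at h2
    have h3 : ‖Qc ^ t‖₊ ≤ r ^ t := by exact_mod_cast h2
    exact_mod_cast h3
  have hto : Tendsto (fun t : ℕ => ‖Qc ^ t‖) atTop (𝓝 0) := by
    refine squeeze_zero' (Eventually.of_forall fun t => norm_nonneg _) hbd ?_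
    exact tendsto_pow_atTop_nhds_zero_of_lt_one r.coe_nonneg (by exact_mod_cast hrlt1)
  refine squeeze_zero_norm' ?_ hto
  filter_upwards with t
  have h1 : ‖(Q ^ t) i j‖ = ‖(Qc ^ t) i j‖ := by
    rw [← hmap t]; simp [Matrix.map_apply]
  rw [h1]
  exact_mod_cast entry_nnnorm_le (Qc ^ t) i j

lemma det_one_sub_ne_zero {n : ℕ} (Q : Matrix (Fin n) (Fin n) ℝ)
    (hρ : specRad Q < 1) : IsUnit (1 - Q).det := by
  set Qc : Matrix (Fin n) (Fin n) ℂ := Q.map Complex.ofReal with hQc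
  have h1 : (1:ℂ) ∈ resolventSet ℂ Qc := by
    apply spectrum.mem_resolventSet_of_spectralRadius_lt
    simpa [specRad, hQc] using hρ
  have hu : IsUnit (1 - Qc) := by simpa [resolventSet, Set.mem_setOf_eq] using h1
  have hudet : IsUnit (1 - Qc).det := (Matrix.isUnit_iff_isUnit_det _).mp hu
  have hmap : (1 - Q).map Complex.ofReal = 1 - Qc := by
    have := map_sub (Complex.ofRealHom.mapMatrix) 1 Q
    rw [map_one] at this
    simp only [RingHom.mapMatrix_apply] at this; exact this
  have hdet : ((1 - Q).det : ℂ) = (1 - Qc).det := by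
    rw [← hmap]
    have := Complex.ofRealHom.map_det (1 - Q)
    simp only [RingHom.mapMatrix_apply, Complex.ofRealHom_eq_coe] at this; exact this
  rw [isUnit_iff_ne_zero]
  intro h
  rw [h] at hdet
  simp at hdet
  rw [← hdet] at hudet
  simp at hudet

end aux

theorem stmt_11 {n : ℕ} (Q : Matrix (Fin n) (Fin n) ℝ)
    (hQ : ∀ i j, 0 ≤ Q i j) (hρ : specRad Q < 1)
    (q0 : Fin n → ℝ) (hq0 : ∀ i, 0 ≤ q0 i) (hq0ne : q0 ≠ 0)
    (d : Fin n → ℝ) (hd : ∀ i, 0 ≤ d i)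
    (hdrift : ∀ t : ℕ, 0 < vnorm1 (Matrix.vecMul q0 (Q ^ t)) →
      vnorm1 (Matrix.vecMul q0 (Q ^ t)) ≤
        dotProduct (Matrix.vecMul q0 (Q ^ t)) ((1 - Q).mulVec d)) :
    dotProduct q0 (((1 - Q)⁻¹).mulVec (fun _ => 1)) ≤ dotProduct q0 d := by
  classical
  set one : Fin n → ℝ := fun _ => 1 with hone
  set B : Matrix (Fin n) (Fin n) ℝ := (1 - Q)⁻¹ with hB
  have hdet : IsUnit (1 - Q).det := det_one_sub_ne_zero Q hρ
  have hBinv : B * (1 - Q) = 1 := Matrix.nonsing_inv_mul _ hdet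
  -- entries of powers are nonnegative
  have hpow : ∀ t i j, 0 ≤ (Q ^ t) i j := by
    intro t
    induction t with
    | zero =>
      intro i j
      by_cases h : i = j <;> simp [Matrix.one_apply, h]
    | succ t ih =>
      intro i j
      rw [pow_succ, Matrix.mul_apply]
      exact Finset.sum_nonneg fun k _ => mul_nonneg (ih i k) (hQ k j)
  have hqt : ∀ (t : ℕ) (j : Fin n), 0 ≤ Matrix.vecMul q0 (Q ^ t) j := by
    intro t j
    simp only [Matrix.vecMul, dotProduct]
    exact Finset.sum_nonneg fun i _ => mul_nonneg (hq0 i) (hpow t i j)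
  -- vnorm1 equals dot product with the one vector
  have hv1 : ∀ t : ℕ, vnorm1 (Matrix.vecMul q0 (Q ^ t)) =
      dotProduct (Matrix.vecMul q0 (Q ^ t)) one := by
    intro t
    unfold vnorm1
    rw [dotProduct]
    refine Finset.sum_congr rfl fun j _ => ?_
    rw [abs_of_nonneg (hqt t j), hone, mul_one]
  set f : ℕ → ℝ := fun t => dotProduct (Matrix.vecMul q0 (Q ^ t)) d with hf
  have hstep : ∀ t : ℕ,
      dotProduct (Matrix.vecMul q0 (Q ^ t)) ((1 - Q).mulVec d) = f t - f (t + 1) := by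
    intro t
    rw [Matrix.dotProduct_mulVec, Matrix.vecMul_vecMul]
    have : Q ^ t * (1 - Q) = Q ^ t - Q ^ (t + 1) := by
      rw [mul_sub, mul_one, pow_succ]
    rw [this, Matrix.vecMul_sub, sub_dotProduct]
  have hterm : ∀ t : ℕ,
      dotProduct (Matrix.vecMul q0 (Q ^ t)) one ≤ f t - f (t + 1) := by
    intro t
    by_cases h : 0 < vnorm1 (Matrix.vecMul q0 (Q ^ t))
    · rw [← hstep t, ← hv1 t]
      exact hdrift t h
    · have h0 : vnorm1 (Matrix.vecMul q0 (Q ^ t)) = 0 := by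
        have : 0 ≤ vnorm1 (Matrix.vecMul q0 (Q ^ t)) :=
          Finset.sum_nonneg fun i _ => abs_nonneg _
        linarith [not_lt.mp h]
      have hz : Matrix.vecMul q0 (Q ^ t) = 0 := by
        funext j
        have := (Finset.sum_eq_zero_iff_of_nonneg
          (fun i _ => abs_nonneg (Matrix.vecMul q0 (Q ^ t) i))).mp h0 j (Finset.mem_univ j)
        simpa [abs_eq_zero] using this
      rw [← hstep t, hz]
      simp [zero_dotProduct]
  have hf0 : f 0 = dotProduct q0 d := by
    simp [hf, Matrix.vecMul_one]
  have hfnonneg : ∀ T, 0 ≤ f T :=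
    fun T => Finset.sum_nonneg fun j _ => mul_nonneg (hqt T j) (hd j)
  have hpartial : ∀ T : ℕ,
      ∑ t ∈ Finset.range T, dotProduct (Matrix.vecMul q0 (Q ^ t)) one ≤
        dotProduct q0 d := by
    intro T
    calc ∑ t ∈ Finset.range T, dotProduct (Matrix.vecMul q0 (Q ^ t)) one
        ≤ ∑ t ∈ Finset.range T, (f t - f (t + 1)) :=
          Finset.sum_le_sum fun t _ => hterm t
      _ = f 0 - f T := Finset.sum_range_sub' f T
      _ ≤ f 0 := by linarith [hfnonneg T]
      _ = _ := hf0
  -- geometric sum identity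
  have hgeo : ∀ T : ℕ, (∑ t ∈ Finset.range T, Q ^ t) = B - B * Q ^ T := by
    intro T
    have h1 : (1 - Q) * (∑ t ∈ Finset.range T, Q ^ t) = 1 - Q ^ T := by
      have h := mul_geom_sum Q T
      have : (1 - Q) = -(Q - 1) := (neg_sub Q 1).symm
      rw [this, neg_mul, h, neg_sub]
    have h2 : B * ((1 - Q) * (∑ t ∈ Finset.range T, Q ^ t)) = B * (1 - Q ^ T) := by rw [h1]
    rw [← mul_assoc, hBinv, one_mul] at h2
    rw [h2, mul_sub, mul_one]
  -- rewrite partial sums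
  have hsum : ∀ T : ℕ,
      ∑ t ∈ Finset.range T, dotProduct (Matrix.vecMul q0 (Q ^ t)) one =
        dotProduct (Matrix.vecMul q0 (∑ t ∈ Finset.range T, Q ^ t)) one := by
    intro T
    induction T with
    | zero => simp
    | succ T ih =>
      rw [Finset.sum_range_succ, Finset.sum_range_succ, ih, Matrix.vecMul_add,
        add_dotProduct]
  have hps : ∀ T : ℕ,
      ∑ t ∈ Finset.range T, dotProduct (Matrix.vecMul q0 (Q ^ t)) one =
        dotProduct q0 (B.mulVec one) -
          dotProduct (Matrix.vecMul q0 (B * Q ^ T)) one := by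
    intro T
    rw [hsum T, hgeo T, Matrix.vecMul_sub, sub_dotProduct, Matrix.dotProduct_mulVec]
  -- the remainder term tends to zero
  have hg0 : Tendsto (fun T : ℕ => dotProduct (Matrix.vecMul q0 (B * Q ^ T)) one)
      atTop (𝓝 0) := by
    have heq : ∀ T : ℕ, dotProduct (Matrix.vecMul q0 (B * Q ^ T)) one =
        ∑ j, ∑ i, Matrix.vecMul q0 B i * (Q ^ T) i j := by
      intro T
      rw [← Matrix.vecMul_vecMul]
      simp [dotProduct, Matrix.vecMul, hone, mul_one]
    simp_rw [heq]
    have : Tendsto (fun T : ℕ => ∑ j : Fin n, ∑ i : Fin n,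
        Matrix.vecMul q0 B i * (Q ^ T) i j) atTop (𝓝 (∑ _j : Fin n, ∑ _i : Fin n, (0:ℝ))) := by
      refine tendsto_finset_sum _ fun j _ => tendsto_finset_sum _ fun i _ => ?_
      simpa using (pow_entry_tendsto_zero Q hρ i j).const_mul (Matrix.vecMul q0 B i)
    simpa using this
  have htends : Tendsto (fun T : ℕ =>
      ∑ t ∈ Finset.range T, dotProduct (Matrix.vecMul q0 (Q ^ t)) one)
      atTop (𝓝 (dotProduct q0 (B.mulVec one))) := by
    simp_rw [hps]
    simpa using tendsto_const_nhds.sub hg0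
  exact le_of_tendsto htends (Eventually.of_forall hpartial)
end

section
/- (Backward drift upper bound) Let Q be a nonnegative square matrix with ρ(Q) < 1 and d a nonnegative vector. If the backward drift ∇ defined by ∇ᵀ = dᵀ(I − Q) satisfies ∇(Y) ≥ 1 for every index Y, then the expected staying time vector s defined by sᵀ = 1ᵀ(I−Q)⁻¹ satisfies s(Y) ≤ d(Y) for every Y. -/
open Matrix Filter Finset
open scoped ENNReal NNReal

theorem stmt_13 {n : ℕ} (Q : Matrix (Fin n) (Fin n) ℝ)
    (hQ : ∀ i j, 0 ≤ Q i j) (hρ : specRad Q < 1)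
    (d : Fin n → ℝ) (hd : ∀ i, 0 ≤ d i)
    (hdrift : ∀ Y, 1 ≤ Matrix.vecMul d (1 - Q) Y) :
    ∀ Y, Matrix.vecMul (fun _ => (1 : ℝ)) (1 - Q)⁻¹ Y ≤ d Y := by
  intro Y
  by_cases h : IsUnit (1 - Q).det
  · -- invertible case
    set s : Fin n → ℝ := Matrix.vecMul (fun _ => (1 : ℝ)) (1 - Q)⁻¹ with hs
    -- powers of Q are entrywise nonnegative
    have hpow : ∀ m i j, 0 ≤ (Q ^ m) i j := by
      intro m
      induction m with
      | zero => intro i j; simp [Matrix.one_apply]; split <;> norm_num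
      | succ m ih =>
        intro i j
        rw [pow_succ, Matrix.mul_apply]
        exact Finset.sum_nonneg fun k _ => mul_nonneg (ih i k) (hQ k j)
    -- vecMul against Q^m is monotone
    have hmono : ∀ (v w : Fin n → ℝ) (m : ℕ), (∀ i, v i ≤ w i) →
        ∀ j, Matrix.vecMul v (Q ^ m) j ≤ Matrix.vecMul w (Q ^ m) j := by
      intro v w m hvw j
      simp only [Matrix.vecMul, dotProduct]
      exact Finset.sum_le_sum fun i _ => mul_le_mul_of_nonneg_right (hvw i) (hpow m i j)
    -- d ≥ 1 + dQ pointwise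
    have hd1 : ∀ j, 1 + Matrix.vecMul d Q j ≤ d j := by
      intro j
      have h1 := hdrift j
      rw [Matrix.vecMul_sub, Matrix.vecMul_one, Pi.sub_apply] at h1
      linarith
    -- vecMul of nonneg vector against Q^m is nonneg
    have hvnn : ∀ (v : Fin n → ℝ), (∀ i, 0 ≤ v i) → ∀ m j,
        0 ≤ Matrix.vecMul v (Q ^ m) j := by
      intro v hv m j
      simp only [Matrix.vecMul, dotProduct]
      exact Finset.sum_nonneg fun i _ => mul_nonneg (hv i) (hpow m i j)
    -- partial sums of column sums of Q^k (plus remainder) bounded by d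
    have hbound : ∀ m j, (∑ k ∈ Finset.range m,
        Matrix.vecMul (fun _ => (1 : ℝ)) (Q ^ k) j) + Matrix.vecMul d (Q ^ m) j ≤ d j := by
      intro m
      induction m with
      | zero => intro j; simp [Matrix.vecMul_one]
      | succ m ih =>
        intro j
        have key : Matrix.vecMul (fun _ => (1 : ℝ)) (Q ^ m) j
            + Matrix.vecMul d (Q ^ (m + 1)) j ≤ Matrix.vecMul d (Q ^ m) j := by
          have e1 : Matrix.vecMul d (Q ^ (m + 1)) j
              = Matrix.vecMul (Matrix.vecMul d Q) (Q ^ m) j := by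
            rw [pow_succ', ← Matrix.vecMul_vecMul]
          have e2 : Matrix.vecMul (fun _ => (1 : ℝ)) (Q ^ m) j
              + Matrix.vecMul (Matrix.vecMul d Q) (Q ^ m) j
              = Matrix.vecMul (fun i => 1 + Matrix.vecMul d Q i) (Q ^ m) j := by
            simp only [Matrix.vecMul, dotProduct, ← Finset.sum_add_distrib,
              add_mul]
          rw [e1, e2]
          exact hmono _ _ m hd1 j
        have := ih j
        rw [Finset.sum_range_succ]
        linarith
    -- the column-sum sequence is summable, hence tends to 0
    have hf0 : ∀ k, 0 ≤ Matrix.vecMul (fun _ => (1 : ℝ)) (Q ^ k) Y :=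
      fun k => hvnn _ (fun _ => zero_le_one) k Y
    have hsum : Summable (fun k => Matrix.vecMul (fun _ => (1 : ℝ)) (Q ^ k) Y) := by
      apply summable_of_sum_range_le hf0 (c := d Y)
      intro m
      have := hbound m Y
      have h2 := hvnn d hd m Y
      linarith
    have htend : Tendsto (fun k => Matrix.vecMul (fun _ => (1 : ℝ)) (Q ^ k) Y)
        atTop (nhds 0) := hsum.tendsto_atTop_zero
    -- u = d - s satisfies u ≥ uQ
    set u : Fin n → ℝ := fun i => d i - s i with hu
    have hsQ : ∀ j, Matrix.vecMul s (1 - Q) j = 1 := by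
      intro j
      rw [hs, Matrix.vecMul_vecMul, Matrix.nonsing_inv_mul _ h, Matrix.vecMul_one]
    have hu1 : ∀ j, Matrix.vecMul u Q j ≤ u j := by
      intro j
      have e : Matrix.vecMul u (1 - Q) j
          = Matrix.vecMul d (1 - Q) j - Matrix.vecMul s (1 - Q) j := by
        rw [hu]
        have : (fun i => d i - s i) = d - s := rfl
        rw [this, Matrix.sub_vecMul, Pi.sub_apply]
      have h1 := hdrift j
      have h2 := hsQ j
      rw [Matrix.vecMul_sub, Matrix.vecMul_one, Pi.sub_apply] at e
      simp only [hu] at e ⊢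
      linarith
    -- u ≥ u Q^m for all m
    have hum : ∀ m j, Matrix.vecMul u (Q ^ m) j ≤ u j := by
      intro m
      induction m with
      | zero => intro j; simp [Matrix.vecMul_one]
      | succ m ih =>
        intro j
        have e1 : Matrix.vecMul u (Q ^ (m + 1)) j
            = Matrix.vecMul (Matrix.vecMul u Q) (Q ^ m) j := by
          rw [pow_succ', ← Matrix.vecMul_vecMul]
        rw [e1]
        exact le_trans (hmono _ _ m hu1 j) (ih j)
    -- lower bound: u Q^m Y ≥ -C * (1 Q^m) Y
    set C : ℝ := ∑ i, |u i| with hC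
    have hlb : ∀ m, -C * Matrix.vecMul (fun _ => (1 : ℝ)) (Q ^ m) Y
        ≤ Matrix.vecMul u (Q ^ m) Y := by
      intro m
      have hPle : ∀ i, (Q ^ m) i Y ≤ Matrix.vecMul (fun _ => (1 : ℝ)) (Q ^ m) Y := by
        intro i
        simp only [Matrix.vecMul, dotProduct, one_mul]
        exact Finset.single_le_sum (fun i _ => hpow m i Y) (Finset.mem_univ i)
      calc -C * Matrix.vecMul (fun _ => (1 : ℝ)) (Q ^ m) Y
          = ∑ i, -|u i| * Matrix.vecMul (fun _ => (1 : ℝ)) (Q ^ m) Y := by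
            rw [← Finset.sum_mul]
            congr 1
            rw [hC, ← Finset.sum_neg_distrib]
        _ ≤ ∑ i, u i * (Q ^ m) i Y := by
            apply Finset.sum_le_sum
            intro i _
            have h1 : -|u i| * Matrix.vecMul (fun _ => (1 : ℝ)) (Q ^ m) Y
                ≤ -|u i| * (Q ^ m) i Y :=
              mul_le_mul_of_nonpos_left (hPle i) (neg_nonpos.mpr (abs_nonneg _))
            have h2 : -|u i| * (Q ^ m) i Y ≤ u i * (Q ^ m) i Y :=
              mul_le_mul_of_nonneg_right (neg_abs_le _) (hpow m i Y)
            linarith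
        _ = Matrix.vecMul u (Q ^ m) Y := by
            simp only [Matrix.vecMul, dotProduct]
    -- conclude 0 ≤ u Y
    have htend2 : Tendsto (fun m => -C * Matrix.vecMul (fun _ => (1 : ℝ)) (Q ^ m) Y)
        atTop (nhds 0) := by
      have := htend.const_mul (-C)
      simpa using this
    have hfinal : (0 : ℝ) ≤ u Y :=
      le_of_tendsto' htend2 fun m => le_trans (hlb m) (hum m Y)
    simp only [hu] at hfinal
    linarith
  · rw [Matrix.nonsing_inv_apply_not_isUnit _ h, Matrix.vecMul_zero]
    exact hd Y
end
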